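/- Let (X_n)_{n∈ℤ} be a strictly stationary, strongly mixing sequence of nonnegative random variables such that X_1 is regularly varying with index α > 0, let (a_n) be positive reals with n·P(X_1 > a_n) → 1, and assume that for every u > 0, P(max_{1≤i≤n} X_i ≤ u·a_n) → exp(−u^{−α}) as n → ∞ (extremal index θ = 1). Then for every integer k ≠ 0 and every r ∈ (0,1), P( X_k > r·a_n | X_0 > a_n ) → 0 as n → ∞; that is, the tail process (Y_k) of (X_n) satisfies Y_k = 0 almost surely for all k ≠ 0. -/

import Mathlib

open MeasureTheory Filter Topology Finset
open scoped Classical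

/-- The sequence `(X_i)_{i ∈ ℤ}` is strictly stationary: for every shift `h`, the law
of the shifted sequence equals the law of the sequence. -/
def StrictStationaryZ {Ω : Type*} [MeasurableSpace Ω] (P : Measure Ω)
    (X : ℤ → Ω → ℝ) : Prop :=
  ∀ h : ℤ, P.map (fun ω (i : ℤ) => X (i + h) ω) = P.map (fun ω (i : ℤ) => X i ω)

/-- The sequence `(X_i)_{i ∈ ℤ}` is strongly mixing (α-mixing): there are coefficients
`α_n → 0` bounding `|P(A ∩ B) − P(A)P(B)|` for `A ∈ σ(X_i : i ≤ j)` and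
`B ∈ σ(X_i : i ≥ j + n)`. -/
def StrongMixingZ {Ω : Type*} [MeasurableSpace Ω] (P : Measure Ω)
    (X : ℤ → Ω → ℝ) : Prop :=
  ∃ α : ℕ → ℝ, Tendsto α atTop (𝓝 0) ∧
    ∀ (n : ℕ) (j : ℤ) (A B : Set Ω),
      MeasurableSet[⨆ i ∈ {i : ℤ | i ≤ j}, MeasurableSpace.comap (X i) inferInstance] A →
      MeasurableSet[⨆ i ∈ {i : ℤ | j + (n : ℤ) ≤ i},
        MeasurableSpace.comap (X i) inferInstance] B →
      |(P (A ∩ B)).toReal - (P A).toReal * (P B).toReal| ≤ α n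

/-- A nonnegative random variable `X` is regularly varying with index `α > 0`:
`P(X > x) > 0` for all `x > 0` and `P(X > tx)/P(X > x) → t^(−α)` as `x → ∞`. -/
def RegularlyVaryingRV {Ω : Type*} [MeasurableSpace Ω] (P : Measure Ω)
    (X : Ω → ℝ) (α : ℝ) : Prop :=
  (∀ x : ℝ, 0 < x → 0 < P {ω | x < X ω}) ∧
  ∀ t : ℝ, 0 < t →
    Tendsto (fun x : ℝ => (P {ω | t * x < X ω}).toReal / (P {ω | x < X ω}).toReal)
      atTop (𝓝 (t ^ (-α)))

/-!
Put `u = r aₙ`, `p = P(X₁ > u)`, `q = P(X_k > u, X₀ > u)` with `k > 0` (stationarity reduces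
`k < 0` to this case) and `M_m = max_{1 ≤ i ≤ m} X_i`; let `β` be the mixing coefficients.
Splitting `{M_m > u}` according to the last exceedance gives `P(M_m > u) ≤ m p - (m - k) q`.
Cutting `{1, …, n}` into `K` blocks of length `m ≈ n / K` separated by gaps of length `g`,
stationarity and strong mixing give `P(M_m ≤ u)^K ≤ P(M_n ≤ u) + K β_g + K (g + 1) p`.
As `n p → c = r^(-α)` and `P(M_n ≤ u) → e^(-c)`, the two bounds combine to
`limsup q / p ≤ 1 - (K / c) (1 - (e^(-c) + K β_g)^(1/K))`. Letting `g → ∞` this becomes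
`1 - (K / c) (1 - e^(-c/K)) ≤ c / K`, which is small for large `K`. Finally regular variation
gives `P(X₁ > r aₙ) / P(X₁ > aₙ) → r^(-α)`, which turns `q / p → 0` into the claim.
-/

section

variable {Ω : Type*}

def maxLE (X : ℤ → Ω → ℝ) (s : Finset ℤ) (u : ℝ) : Set Ω := {ω | ∀ i ∈ s, X i ω ≤ u}

section MaxLE

variable {X : ℤ → Ω → ℝ}

theorem maxLE_union (s t : Finset ℤ) (u : ℝ) :
    maxLE X (s ∪ t) u = maxLE X s u ∩ maxLE X t u := by
  ext ω
  simp only [maxLE, Finset.mem_union, Set.mem_ofPred_eq, Set.mem_inter_iff]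
  exact ⟨fun h => ⟨fun i hi => h i (.inl hi), fun i hi => h i (.inr hi)⟩,
    fun h i hi => hi.elim (h.1 i) (h.2 i)⟩

theorem compl_maxLE (s : Finset ℤ) (u : ℝ) :
    (maxLE X s u)ᶜ = ⋃ i ∈ s, {ω | u < X i ω} := by
  ext ω
  simp [maxLE]

theorem maxLE_Ioc_zero (n : ℕ) (u : ℝ) :
    maxLE X (Ioc 0 n) u = {ω | ∀ i ∈ Finset.Icc 1 n, X (i : ℤ) ω ≤ u} := by
  ext ω
  simp only [maxLE, Set.mem_ofPred_eq, Finset.mem_Ioc, Finset.mem_Icc]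
  constructor
  · intro h i hi
    exact h i ⟨by omega, by omega⟩
  · intro h i hi
    lift i to ℕ using hi.1.le
    exact h i ⟨by omega, by omega⟩

theorem measurableSet_maxLE_of_le {m : MeasurableSpace Ω} {s : Finset ℤ}
    (hs : ∀ i ∈ s, MeasurableSpace.comap (X i) inferInstance ≤ m) (u : ℝ) :
    MeasurableSet[m] (maxLE X s u) := by
  have : maxLE X s u = ⋂ i ∈ s, X i ⁻¹' Set.Iic u := by
    ext ω
    simp [maxLE]
  rw [this]
  exact .biInter s.countable_toSet fun i hi => hs i hi _ ⟨_, measurableSet_Iic, rfl⟩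

theorem measurableSet_maxLE [MeasurableSpace Ω] (hmeas : ∀ i, Measurable (X i)) (s : Finset ℤ)
    (u : ℝ) : MeasurableSet (maxLE X s u) :=
  measurableSet_maxLE_of_le (fun i _ => (hmeas i).comap_le) u

end MaxLE

namespace StrictStationaryZ

variable [MeasurableSpace Ω] {P : Measure Ω} {X : ℤ → Ω → ℝ}
  (hstat : StrictStationaryZ P X) (hmeas : ∀ i, Measurable (X i))
include hstat hmeas

theorem measure_shift (h : ℤ) {S : Set (ℤ → ℝ)} (hS : MeasurableSet S) :
    P {ω | (fun i => X (i + h) ω) ∈ S} = P {ω | (fun i => X i ω) ∈ S} := by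
  have hshift : Measurable fun ω (i : ℤ) => X (i + h) ω := measurable_pi_lambda _ fun _ => hmeas _
  have hX : Measurable fun ω (i : ℤ) => X i ω := measurable_pi_lambda _ fun _ => hmeas _
  change P ((fun ω i => X (i + h) ω) ⁻¹' S) = P ((fun ω i => X i ω) ⁻¹' S)
  rw [← Measure.map_apply hshift hS, ← Measure.map_apply hX hS, hstat h]

theorem measureReal_lt_eq (i j : ℤ) (u : ℝ) :
    P.real {ω | u < X i ω} = P.real {ω | u < X j ω} := by
  have shift (h : ℤ) : P.real {ω | u < X h ω} = P.real {ω | u < X 0 ω} := by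
    refine congrArg ENNReal.toReal ?_
    have hS : MeasurableSet {f : ℤ → ℝ | u < f 0} :=
      measurableSet_lt measurable_const (measurable_pi_apply 0)
    simpa using measure_shift hstat hmeas h hS
  rw [shift i, shift j]

theorem measureReal_inter_lt_eq (k h : ℤ) (u v : ℝ) :
    P.real ({ω | u < X (k + h) ω} ∩ {ω | v < X h ω}) =
      P.real ({ω | u < X k ω} ∩ {ω | v < X 0 ω}) := by
  refine congrArg ENNReal.toReal ?_
  have hS : MeasurableSet {f : ℤ → ℝ | u < f k ∧ v < f 0} :=
    (measurableSet_lt measurable_const (measurable_pi_apply k)).inter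
      (measurableSet_lt measurable_const (measurable_pi_apply 0))
  simpa [Set.ofPred_and] using measure_shift hstat hmeas h hS

theorem measureReal_maxLE_Ioc_add (a b c : ℤ) (u : ℝ) :
    P.real (maxLE X (Ioc (a + c) (b + c)) u) = P.real (maxLE X (Ioc a b) u) := by
  have hS : MeasurableSet {f : ℤ → ℝ | ∀ i ∈ Ioc a b, f i ≤ u} := by
    simp only [Set.ofPred_forall]
    exact .iInter fun i => .iInter fun _ =>
      measurableSet_le (measurable_pi_apply i) measurable_const
  have hmap : maxLE X (Ioc (a + c) (b + c)) u = {ω | (fun i => X (i + c) ω) ∈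
      {f : ℤ → ℝ | ∀ i ∈ Ioc a b, f i ≤ u}} := by
    ext ω
    simp only [maxLE, ← map_add_right_Ioc, Finset.forall_mem_map, Set.mem_ofPred_eq]
    rfl
  refine congrArg ENNReal.toReal ?_
  rw [hmap, measure_shift hstat hmeas c hS]
  rfl

end StrictStationaryZ

section Mixing

abbrev pastMeasurableSpace (X : ℤ → Ω → ℝ) (j : ℤ) : MeasurableSpace Ω :=
  ⨆ i ∈ {i : ℤ | i ≤ j}, MeasurableSpace.comap (X i) inferInstance

abbrev futureMeasurableSpace (X : ℤ → Ω → ℝ) (j : ℤ) : MeasurableSpace Ω :=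
  ⨆ i ∈ {i : ℤ | j ≤ i}, MeasurableSpace.comap (X i) inferInstance

theorem measurableSet_maxLE_past {X : ℤ → Ω → ℝ} {s : Finset ℤ} {j : ℤ} (hs : ∀ i ∈ s, i ≤ j)
    (u : ℝ) : MeasurableSet[pastMeasurableSpace X j] (maxLE X s u) :=
  measurableSet_maxLE_of_le (fun i hi =>
    le_iSup₂ (f := fun i (_ : i ∈ {i : ℤ | i ≤ j}) => MeasurableSpace.comap (X i) _) i (hs i hi)) u

theorem measurableSet_maxLE_future {X : ℤ → Ω → ℝ} {s : Finset ℤ} {j : ℤ} (hs : ∀ i ∈ s, j ≤ i)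
    (u : ℝ) : MeasurableSet[futureMeasurableSpace X j] (maxLE X s u) :=
  measurableSet_maxLE_of_le (fun i hi =>
    le_iSup₂ (f := fun i (_ : i ∈ {i : ℤ | j ≤ i}) => MeasurableSpace.comap (X i) _) i (hs i hi)) u

variable [MeasurableSpace Ω]

def MixingCoeffBound (P : Measure Ω) (X : ℤ → Ω → ℝ) (α : ℕ → ℝ) : Prop :=
  ∀ (n : ℕ) (j : ℤ) (A B : Set Ω), MeasurableSet[pastMeasurableSpace X j] A →
    MeasurableSet[futureMeasurableSpace X (j + n)] B → |P.real (A ∩ B) - P.real A * P.real B| ≤ α n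

variable {P : Measure Ω} {X : ℤ → Ω → ℝ} {α : ℕ → ℝ}

theorem StrongMixingZ.exists_mixingCoeffBound (h : StrongMixingZ P X) :
    ∃ α : ℕ → ℝ, Tendsto α atTop (𝓝 0) ∧ MixingCoeffBound P X α :=
  h

namespace MixingCoeffBound

theorem nonneg (hmix : MixingCoeffBound P X α) (n : ℕ) : 0 ≤ α n :=
  (abs_nonneg _).trans (hmix n 0 ∅ ∅ (@MeasurableSet.empty _ (pastMeasurableSpace X 0))
    (@MeasurableSet.empty _ (futureMeasurableSpace X _)))

theorem mul_sub_le_measureReal_inter (hmix : MixingCoeffBound P X α) {n : ℕ} {j : ℤ}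
    {A B : Set Ω} (hA : MeasurableSet[pastMeasurableSpace X j] A)
    (hB : MeasurableSet[futureMeasurableSpace X (j + n)] B) :
    P.real A * P.real B - α n ≤ P.real (A ∩ B) := by
  linarith [neg_abs_le (P.real (A ∩ B) - P.real A * P.real B), hmix n j A B hA hB]

end MixingCoeffBound

end Mixing

noncomputable def spacedBlocks (m g K : ℕ) : Finset ℤ :=
  (range K).biUnion fun j => Ioc ((j : ℤ) * (m + g)) (m + j * (m + g))

theorem spacedBlocks_succ (m g K : ℕ) :
    spacedBlocks m g (K + 1) = spacedBlocks m g K ∪ Ioc ((K : ℤ) * (m + g)) (m + K * (m + g)) := by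
  rw [spacedBlocks, range_add_one, biUnion_insert, union_comm, spacedBlocks]

theorem spacedBlocks_subset_Ioc (m g K : ℕ) :
    spacedBlocks m g K ⊆ Ioc 0 (K * (m + g) - g) := fun i hi => by
  obtain ⟨j, hj, hij⟩ := Finset.mem_biUnion.mp hi
  rw [Finset.mem_range] at hj
  rw [Finset.mem_Ioc] at hij ⊢
  have hjK : (j : ℤ) + 1 ≤ K := by exact_mod_cast hj
  constructor <;> nlinarith

theorem card_spacedBlocks (m g K : ℕ) : #(spacedBlocks m g K) = K * m := by
  rw [spacedBlocks, card_biUnion]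
  · simp
  · intro j _ j' _ hjj'
    refine Finset.disjoint_left.mpr fun i hi hi' => ?_
    rw [Finset.mem_Ioc] at hi hi'
    rcases Nat.lt_or_gt_of_ne hjj' with h | h
    · have : (j : ℤ) + 1 ≤ j' := by exact_mod_cast h
      nlinarith
    · have : (j' : ℤ) + 1 ≤ j := by exact_mod_cast h
      nlinarith

theorem measureReal_maxLE_le_add_sum [MeasurableSpace Ω] {P : Measure Ω} [IsFiniteMeasure P]
    {X : ℤ → Ω → ℝ} (s t : Finset ℤ) (u : ℝ) :
    P.real (maxLE X t u) ≤ P.real (maxLE X s u) + ∑ i ∈ s \ t, P.real {ω | u < X i ω} := by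
  have hcover : maxLE X t u ⊆ maxLE X s u ∪ ⋃ i ∈ s \ t, {ω | u < X i ω} := by
    intro ω hω
    by_cases hi : ∃ i ∈ s \ t, u < X i ω
    · obtain ⟨i, hi, hu⟩ := hi
      exact Or.inr (Set.mem_biUnion hi hu)
    · push Not at hi
      exact Or.inl fun i his =>
        if hit : i ∈ t then hω i hit else hi i (Finset.mem_sdiff.mpr ⟨his, hit⟩)
  calc P.real (maxLE X t u)
      ≤ P.real (maxLE X s u ∪ ⋃ i ∈ s \ t, {ω | u < X i ω}) := measureReal_mono hcover
    _ ≤ P.real (maxLE X s u) + P.real (⋃ i ∈ s \ t, {ω | u < X i ω}) := measureReal_union_le _ _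
    _ ≤ _ := by gcongr; exact measureReal_biUnion_finset_le _ _

namespace MixingCoeffBound

variable [MeasurableSpace Ω] {P : Measure Ω} [IsProbabilityMeasure P] {X : ℤ → Ω → ℝ}
  {α : ℕ → ℝ}

theorem pow_sub_le_measureReal_spacedBlocks (hmix : MixingCoeffBound P X α)
    (hstat : StrictStationaryZ P X) (hmeas : ∀ i, Measurable (X i)) (m g K : ℕ) (u : ℝ) :
    P.real (maxLE X (Ioc 0 m) u) ^ K - K * α g ≤ P.real (maxLE X (spacedBlocks m g K) u) := by
  set s := P.real (maxLE X (Ioc 0 m) u)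
  induction K with
  | zero => simp [spacedBlocks, maxLE]
  | succ K ih =>
    set A := maxLE X (spacedBlocks m g K) u
    set B := maxLE X (Ioc ((K : ℤ) * (m + g)) (m + K * (m + g))) u
    have hA : MeasurableSet[pastMeasurableSpace X (K * (m + g) - g)] A :=
      measurableSet_maxLE_past
        (fun i hi => (Finset.mem_Ioc.mp (spacedBlocks_subset_Ioc m g K hi)).2) u
    have hB : MeasurableSet[futureMeasurableSpace X ((K * (m + g) - g : ℤ) + g)] B :=
      measurableSet_maxLE_future (fun i hi => by linarith [(Finset.mem_Ioc.mp hi).1]) u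
    have hPB : P.real B = s := by
      simpa using hstat.measureReal_maxLE_Ioc_add hmeas 0 m (K * (m + g)) u
    have hs0 : 0 ≤ s := measureReal_nonneg
    have hs1 : s ≤ 1 := measureReal_le_one
    have hαg := hmix.nonneg g
    have hmixAB := hmix.mul_sub_le_measureReal_inter hA hB
    rw [hPB] at hmixAB
    rw [spacedBlocks_succ, maxLE_union]
    change _ ≤ P.real (A ∩ B)
    push_cast
    rw [pow_succ]
    nlinarith [mul_le_mul_of_nonneg_right ih hs0,
      mul_nonneg (sub_nonneg.2 hs1) (mul_nonneg K.cast_nonneg hαg)]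

theorem pow_measureReal_maxLE_le (hmix : MixingCoeffBound P X α) (hstat : StrictStationaryZ P X)
    (hmeas : ∀ i, Measurable (X i)) {m g K n : ℕ} (hn : K * (m + g) ≤ n) (u : ℝ) :
    P.real (maxLE X (Ioc 0 m) u) ^ K ≤
      P.real (maxLE X (Ioc 0 n) u) + K * α g + (n - K * m) * P.real {ω | u < X 1 ω} := by
  have hsub : spacedBlocks m g K ⊆ Ioc 0 n := by
    have : (K : ℤ) * (m + g) ≤ n := by exact_mod_cast hn
    exact (spacedBlocks_subset_Ioc m g K).trans (Ioc_subset_Ioc_right (by linarith))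
  have hKm : K * m ≤ n := le_trans (Nat.mul_le_mul_left K (Nat.le_add_right m g)) hn
  have hsum : ∑ i ∈ Ioc (0 : ℤ) n \ spacedBlocks m g K, P.real {ω | u < X i ω} =
      (n - K * m) * P.real {ω | u < X 1 ω} := by
    rw [sum_congr rfl fun i _ => hstat.measureReal_lt_eq hmeas i 1 u, sum_const, nsmul_eq_mul,
      card_sdiff_of_subset hsub, card_spacedBlocks, Int.card_Ioc, sub_zero, Int.toNat_natCast,
      Nat.cast_sub hKm, Nat.cast_mul]
  linarith [hmix.pow_sub_le_measureReal_spacedBlocks hstat hmeas m g K u,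
    measureReal_maxLE_le_add_sum (P := P) (X := X) (Ioc (0 : ℤ) n) (spacedBlocks m g K) u]

end MixingCoeffBound

theorem biUnion_Ioc_subset_biUnion_sdiff_union (A : ℤ → Set Ω) {a b k : ℤ} (hk : 0 < k) :
    ⋃ i ∈ Ioc a b, A i ⊆ (⋃ i ∈ Ioc a (b - k), A i \ A (i + k)) ∪ ⋃ i ∈ Ioc (b - k) b, A i := by
  intro ω hω
  obtain ⟨i₀, hi₀, hωi₀⟩ := Set.mem_iUnion₂.mp hω
  -- `i` is the last index in `(a, b]` with `ω ∈ A i`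
  obtain ⟨i, hi, hmax⟩ := ((Ioc a b).filter (ω ∈ A ·)).exists_max_image id
    ⟨i₀, Finset.mem_filter.mpr ⟨hi₀, hωi₀⟩⟩
  rw [Finset.mem_filter, Finset.mem_Ioc] at hi
  by_cases hik : b - k < i
  · exact Or.inr (Set.mem_biUnion (Finset.mem_Ioc.mpr ⟨hik, hi.1.2⟩) hi.2)
  · refine Or.inl (Set.mem_biUnion (Finset.mem_Ioc.mpr ⟨hi.1.1, by linarith⟩)
      ⟨hi.2, fun hik' => ?_⟩)
    have := hmax (i + k)
      (Finset.mem_filter.mpr ⟨Finset.mem_Ioc.mpr ⟨by linarith, by linarith⟩, hik'⟩)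
    simp only [id] at this
    linarith

theorem StrictStationaryZ.one_sub_measureReal_maxLE_le [MeasurableSpace Ω] {P : Measure Ω}
    [IsProbabilityMeasure P] {X : ℤ → Ω → ℝ} (hstat : StrictStationaryZ P X)
    (hmeas : ∀ i, Measurable (X i)) {k m : ℕ} (hk : 0 < k) (hkm : k ≤ m) (u : ℝ) :
    1 - P.real (maxLE X (Ioc 0 m) u) ≤
      m * P.real {ω | u < X 1 ω} - (m - k) * P.real ({ω | u < X k ω} ∩ {ω | u < X 0 ω}) := by
  set p := P.real {ω | u < X 1 ω}
  set q := P.real ({ω | u < X k ω} ∩ {ω | u < X 0 ω})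
  set A : ℤ → Set Ω := fun i => {ω | u < X i ω}
  have hp (i : ℤ) : P.real (A i) = p := hstat.measureReal_lt_eq hmeas i 1 u
  have hdiff (i : ℤ) : P.real (A i \ A (i + k)) = p - q := by
    have hq : P.real (A i ∩ A (i + k)) = q := by
      rw [Set.inter_comm, add_comm]
      exact hstat.measureReal_inter_lt_eq hmeas k i u u
    have hA : MeasurableSet (A (i + k)) := measurableSet_lt measurable_const (hmeas (i + k))
    linarith [hp i, measureReal_inter_add_sdiff (μ := P) (s := A i) hA]
  have hcard {a b : ℤ} (hab : a ≤ b) : (#(Ioc a b) : ℝ) = b - a := by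
    exact_mod_cast Int.card_Ioc_of_le _ _ hab
  calc 1 - P.real (maxLE X (Ioc 0 m) u) = P.real (⋃ i ∈ Ioc (0 : ℤ) m, A i) := by
        rw [← compl_maxLE, probReal_compl_eq_one_sub (measurableSet_maxLE hmeas _ _)]
    _ ≤ P.real ((⋃ i ∈ Ioc (0 : ℤ) (m - k), A i \ A (i + k)) ∪ ⋃ i ∈ Ioc ((m : ℤ) - k) m, A i) :=
        measureReal_mono (biUnion_Ioc_subset_biUnion_sdiff_union A (by exact_mod_cast hk))
    _ ≤ ∑ i ∈ Ioc (0 : ℤ) (m - k), P.real (A i \ A (i + k)) +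
          ∑ i ∈ Ioc ((m : ℤ) - k) m, P.real (A i) :=
        (measureReal_union_le _ _).trans
          (add_le_add (measureReal_biUnion_finset_le _ _) (measureReal_biUnion_finset_le _ _))
    _ = m * p - (m - k) * q := by
        have hkm' : (k : ℤ) ≤ m := by exact_mod_cast hkm
        rw [sum_congr rfl fun i _ => hdiff i, sum_congr rfl fun i _ => hp i, sum_const, sum_const,
          nsmul_eq_mul, nsmul_eq_mul, hcard (by linarith), hcard (by linarith)]
        push_cast
        ring

theorem tendsto_zero_of_tendsto_natCast_mul {f : ℕ → ℝ} {c : ℝ}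
    (hf : Tendsto (fun n => n * f n) atTop (𝓝 c)) : Tendsto f atTop (𝓝 0) := by
  have h := hf.mul (tendsto_one_div_atTop_nhds_zero_nat (𝕜 := ℝ))
  rw [mul_zero] at h
  refine h.congr' ?_
  filter_upwards [eventually_ne_atTop 0] with n hn
  field_simp

theorem tendsto_natCast_div_sub_mul {f : ℕ → ℝ} {c : ℝ}
    (hf : Tendsto (fun n => n * f n) atTop (𝓝 c)) {K : ℕ} (hK : K ≠ 0) (g : ℕ) :
    Tendsto (fun n => ((n / K - g : ℕ) : ℝ) * f n) atTop (𝓝 (c / K)) := by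
  have herr : Tendsto (fun n => ((n / K - g : ℕ) : ℝ) * f n - n * f n / K) atTop (𝓝 0) := by
    have hbound : Tendsto (fun n => ((g : ℝ) + 1) * ‖f n‖) atTop (𝓝 0) := by
      simpa using (tendsto_zero_of_tendsto_natCast_mul hf).norm.const_mul ((g : ℝ) + 1)
    refine squeeze_zero_norm' ?_ hbound
    filter_upwards [eventually_ge_atTop (K * g)] with n hn
    have hgd : g ≤ n / K := (Nat.le_div_iff_mul_le (Nat.pos_of_ne_zero hK)).mpr (by linarith)
    have hd : ((n / K : ℕ) : ℝ) ≤ n / K := by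
      rw [← Nat.floor_div_eq_div (K := ℝ)]
      exact Nat.floor_le (by positivity)
    have hd' : (n : ℝ) / K < (n / K : ℕ) + 1 := by
      rw [← Nat.floor_div_eq_div (K := ℝ)]
      exact Nat.lt_floor_add_one _
    rw [Real.norm_eq_abs, mul_div_right_comm, ← sub_mul, abs_mul, Real.norm_eq_abs,
      Nat.cast_sub hgd]
    gcongr
    rw [abs_le]
    constructor <;> linarith
  simpa using herr.add (hf.div_const K)

theorem sub_one_sub_exp_neg_le_sq {y : ℝ} (hy : 0 ≤ y) : y - (1 - Real.exp (-y)) ≤ y ^ 2 := by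
  have h1 : Real.exp (-y) * Real.exp y = 1 := by rw [← Real.exp_add, neg_add_cancel, Real.exp_zero]
  have h2 := Real.add_one_le_exp y
  nlinarith [Real.exp_pos (-y), pow_nonneg hy 3]

theorem exists_blocks_bound_lt {c ε : ℝ} (hc : 0 < c) (hε : 0 < ε) {x : ℕ → ℝ}
    (hx : Tendsto x atTop (𝓝 0)) : ∃ K : ℕ, K ≠ 0 ∧ ∃ g : ℕ,
      (c / K - (1 - (Real.exp (-c) + K * x g) ^ (K⁻¹ : ℝ))) / (c / K) < ε := by
  obtain ⟨K, hcK⟩ := exists_nat_gt (c / ε)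
  have hKpos : (0 : ℝ) < K := (div_pos hc hε).trans hcK
  set y := c / (K : ℝ)
  have hy : 0 < y := div_pos hc hKpos
  have hyε : y < ε := by
    rw [div_lt_iff₀ hε] at hcK
    rwa [div_lt_iff₀ hKpos, mul_comm]
  have hroot : Real.exp (-c) ^ (K⁻¹ : ℝ) = Real.exp (-y) := by
    rw [← Real.exp_mul, neg_mul, ← div_eq_mul_inv]
  have hlim : (y - (1 - (Real.exp (-c) + K * 0) ^ (K⁻¹ : ℝ))) / y < ε := by
    rw [mul_zero, add_zero, hroot, div_lt_iff₀ hy]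
    nlinarith [sub_one_sub_exp_neg_le_sq hy.le]
  have hcont : Tendsto (fun g => (y - (1 - (Real.exp (-c) + K * x g) ^ (K⁻¹ : ℝ))) / y) atTop
      (𝓝 ((y - (1 - (Real.exp (-c) + K * 0) ^ (K⁻¹ : ℝ))) / y)) :=
    ((((hx.const_mul _).const_add _).rpow_const (.inr (by positivity))).const_sub 1
      |>.const_sub y).div_const y
  exact ⟨K, Nat.cast_pos.mp hKpos |>.ne', (hcont.eventually_lt_const hlim).exists⟩

theorem div_le_of_pow_le_of_one_sub_le {K : ℕ} (hK : K ≠ 0) {s T m k p q : ℝ} (hs : 0 ≤ s)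
    (hsT : s ^ K ≤ T) (hbonf : 1 - s ≤ m * p - (m - k) * q) (hp : 0 < p)
    (hden : 0 < m * p - k * p) :
    q / p ≤ (m * p - (1 - T ^ (K⁻¹ : ℝ))) / (m * p - k * p) := by
  have hsW : s ≤ T ^ (K⁻¹ : ℝ) := by
    rw [← Real.pow_rpow_inv_natCast hs hK]
    exact Real.rpow_le_rpow (pow_nonneg hs K) hsT (by positivity)
  rw [div_le_div_iff₀ hp hden]
  nlinarith

namespace MixingCoeffBound

variable [MeasurableSpace Ω] {P : Measure Ω} [IsProbabilityMeasure P] {X : ℤ → Ω → ℝ}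
  {α : ℕ → ℝ}

theorem measureReal_inter_div_le (hmix : MixingCoeffBound P X α) (hstat : StrictStationaryZ P X)
    (hmeas : ∀ i, Measurable (X i)) {k n K g : ℕ} (hk : 0 < k) (hK : K ≠ 0) (hkn : k + g < n / K)
    {u : ℝ} (hp : 0 < P.real {ω | u < X 1 ω}) :
    P.real ({ω | u < X k ω} ∩ {ω | u < X 0 ω}) / P.real {ω | u < X 1 ω} ≤
      ((n / K - g : ℕ) * P.real {ω | u < X 1 ω} - (1 - (P.real (maxLE X (Ioc 0 n) u) +
        K * α g + K * (g + 1) * P.real {ω | u < X 1 ω}) ^ (K⁻¹ : ℝ))) /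
      ((n / K - g : ℕ) * P.real {ω | u < X 1 ω} - k * P.real {ω | u < X 1 ω}) := by
  set m := n / K - g
  have hblock : K * (m + g) ≤ n := by
    rw [Nat.sub_add_cancel (by omega)]
    exact Nat.mul_div_le n K
  have hrem : (n : ℝ) - K * m ≤ K * (g + 1) := by
    have hn : n < K * (n / K + 1) := Nat.lt_mul_div_succ n (Nat.pos_of_ne_zero hK)
    have hn' : (n : ℝ) < K * ((n / K : ℕ) + 1) := by exact_mod_cast hn
    rw [Nat.cast_sub (by omega : g ≤ n / K)]
    linarith
  have hkm : (k : ℝ) < m := by exact_mod_cast (by omega : k < m)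
  refine div_le_of_pow_le_of_one_sub_le hK measureReal_nonneg ?_
    (hstat.one_sub_measureReal_maxLE_le hmeas hk (by omega) u) hp (by nlinarith)
  linarith [hmix.pow_measureReal_maxLE_le hstat hmeas hblock u,
    mul_le_mul_of_nonneg_right hrem hp.le]

theorem eventually_measureReal_inter_div_lt (hmix : MixingCoeffBound P X α)
    (hstat : StrictStationaryZ P X) (hmeas : ∀ i, Measurable (X i)) {u : ℕ → ℝ} {c : ℝ}
    (hc : 0 < c) (hnp : Tendsto (fun n : ℕ => n * P.real {ω | u n < X 1 ω}) atTop (𝓝 c))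
    (hmax : Tendsto (fun n : ℕ => P.real (maxLE X (Ioc 0 (n : ℤ)) (u n))) atTop (𝓝 (Real.exp (-c))))
    {k : ℕ} (hk : 0 < k) {K : ℕ} (hK : K ≠ 0) (g : ℕ) {ε : ℝ}
    (hε : (c / K - (1 - (Real.exp (-c) + K * α g) ^ (K⁻¹ : ℝ))) / (c / K) < ε) :
    ∀ᶠ n in atTop,
      P.real ({ω | u n < X k ω} ∩ {ω | u n < X 0 ω}) / P.real {ω | u n < X 1 ω} < ε := by
  set p := fun n => P.real {ω | u n < X 1 ω}
  have hp0 := tendsto_zero_of_tendsto_natCast_mul hnp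
  have hmp := tendsto_natCast_div_sub_mul hnp hK g
  have hden := hmp.sub (hp0.const_mul (k : ℝ))
  have hT := (hmax.add_const (K * α g)).add (hp0.const_mul ((K : ℝ) * (g + 1)))
  have hW := (hT.rpow_const (p := (K : ℝ)⁻¹) (.inr (by positivity))).const_sub 1
  have hR := (hmp.sub hW).div hden (by rw [mul_zero, sub_zero]; positivity)
  simp only [mul_zero, add_zero, sub_zero] at hR hden
  have hppos : ∀ᶠ n in atTop, 0 < p n :=
    (hnp.eventually_const_lt hc).mono fun n hn => pos_of_mul_pos_right hn n.cast_nonneg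
  filter_upwards [hR.eventually_lt_const hε, hden.eventually_const_lt (by positivity), hppos]
    with n hRn hdenn hpn
  have hkn : k + g < n / K := by
    have : (k : ℝ) < (n / K - g : ℕ) := by nlinarith
    have : k < n / K - g := by exact_mod_cast this
    omega
  exact (hmix.measureReal_inter_div_le hstat hmeas hk hK hkn hpn).trans_lt hRn

theorem tendsto_measureReal_inter_div (hmix : MixingCoeffBound P X α)
    (hα : Tendsto α atTop (𝓝 0)) (hstat : StrictStationaryZ P X) (hmeas : ∀ i, Measurable (X i))
    {u : ℕ → ℝ} {c : ℝ} (hc : 0 < c)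
    (hnp : Tendsto (fun n : ℕ => n * P.real {ω | u n < X 1 ω}) atTop (𝓝 c))
    (hmax : Tendsto (fun n : ℕ => P.real (maxLE X (Ioc 0 (n : ℤ)) (u n))) atTop (𝓝 (Real.exp (-c))))
    {k : ℕ} (hk : 0 < k) :
    Tendsto (fun n => P.real ({ω | u n < X k ω} ∩ {ω | u n < X 0 ω}) / P.real {ω | u n < X 1 ω})
      atTop (𝓝 0) := by
  refine tendsto_order.2 ⟨fun ε hε => .of_forall fun n =>
    hε.trans_le (div_nonneg measureReal_nonneg measureReal_nonneg), fun ε hε => ?_⟩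
  obtain ⟨K, hK, g, hg⟩ := exists_blocks_bound_lt hc hε hα
  exact hmix.eventually_measureReal_inter_div_lt hstat hmeas hc hnp hmax hk hK g hg

end MixingCoeffBound

theorem tendsto_atTop_of_measureReal_lt_tendsto_zero [MeasurableSpace Ω] {P : Measure Ω}
    [IsFiniteMeasure P] {Y : Ω → ℝ} (hY : ∀ x, 0 < x → 0 < P {ω | x < Y ω}) {a : ℕ → ℝ}
    (ha : Tendsto (fun n => P.real {ω | a n < Y ω}) atTop (𝓝 0)) : Tendsto a atTop atTop := by
  refine tendsto_atTop.2 fun M => ?_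
  have hM : 0 < P.real {ω | max M 1 < Y ω} :=
    ENNReal.toReal_pos (hY _ (lt_max_of_lt_right one_pos)).ne' (measure_ne_top _ _)
  filter_upwards [ha.eventually_lt_const hM] with n hn
  by_contra! hlt
  have hsub : {ω | max M 1 < Y ω} ⊆ {ω | a n < Y ω} := fun ω hω =>
    (hlt.trans_le (le_max_left M 1)).trans hω
  exact (measureReal_mono hsub).not_gt hn

theorem StrictStationaryZ.measureReal_inter_le_natAbs [MeasurableSpace Ω] {P : Measure Ω}
    [IsFiniteMeasure P] {X : ℤ → Ω → ℝ} (hstat : StrictStationaryZ P X)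
    (hmeas : ∀ i, Measurable (X i)) {k : ℤ} (hk : k ≠ 0) {u v : ℝ} (huv : u ≤ v) :
    P.real ({ω | u < X k ω} ∩ {ω | v < X 0 ω}) ≤
      P.real ({ω | u < X k.natAbs ω} ∩ {ω | u < X 0 ω}) := by
  rcases hk.lt_or_gt with hneg | hpos
  · have hshift := hstat.measureReal_inter_lt_eq hmeas (-k) k v u
    rw [neg_add_cancel, Set.inter_comm] at hshift
    rw [hshift, Int.ofNat_natAbs_of_nonpos hneg.le]
    exact measureReal_mono (Set.inter_subset_inter_left _ fun ω hω => huv.trans_lt hω)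
  · rw [Int.natAbs_of_nonneg hpos.le]
    exact measureReal_mono (Set.inter_subset_inter_right _ fun ω hω => huv.trans_lt hω)

end

theorem tail_process_vanishes_general
    {Ω : Type*} [MeasurableSpace Ω] (P : Measure Ω) [IsProbabilityMeasure P]
    (X : ℤ → Ω → ℝ) (hmeas : ∀ i, Measurable (X i))
    (hstat : StrictStationaryZ P X) (hmix : StrongMixingZ P X)
    (α : ℝ) (hrv : RegularlyVaryingRV P (X 1) α)
    (a : ℕ → ℝ)
    (han : Tendsto (fun n : ℕ => (n : ℝ) * (P {ω | a n < X 1 ω}).toReal) atTop (𝓝 1))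
    (hei : ∀ u : ℝ, 0 < u →
      Tendsto (fun n : ℕ =>
          (P {ω | ∀ i ∈ Finset.Icc 1 n, X (i : ℤ) ω ≤ u * a n}).toReal)
        atTop (𝓝 (Real.exp (-u ^ (-α))))) :
    ∀ k : ℤ, k ≠ 0 → ∀ r : ℝ, 0 < r → r < 1 →
      Tendsto (fun n : ℕ =>
        (P ({ω | r * a n < X k ω} ∩ {ω | a n < X 0 ω})).toReal /
          (P {ω | a n < X 0 ω}).toReal)
        atTop (𝓝 0) := by
  intro k hk r hr0 hr1
  obtain ⟨β, hβ, hmixβ⟩ := hmix.exists_mixingCoeffBound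
  have hatop := tendsto_atTop_of_measureReal_lt_tendsto_zero hrv.1
    (tendsto_zero_of_tendsto_natCast_mul han)
  have hpos : ∀ᶠ n in atTop, 0 < P.real {ω | a n < X 1 ω} :=
    (hatop.eventually_gt_atTop 0).mono fun n hn =>
      ENNReal.toReal_pos (hrv.1 _ hn).ne' (measure_ne_top _ _)
  have hratio : Tendsto (fun n => P.real {ω | r * a n < X 1 ω} / P.real {ω | a n < X 1 ω}) atTop
      (𝓝 (r ^ (-α))) := (hrv.2 r hr0).comp hatop
  have hnp : Tendsto (fun n : ℕ => n * P.real {ω | r * a n < X 1 ω}) atTop (𝓝 (r ^ (-α))) := by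
    refine (one_mul (r ^ (-α)) ▸ han.mul hratio).congr' ?_
    filter_upwards [hpos] with n hn
    change (n : ℝ) * P.real _ * (P.real _ / P.real _) = _
    rw [mul_assoc, mul_div_cancel₀ _ hn.ne']
  have hmax : Tendsto (fun n : ℕ => P.real (maxLE X (Ioc 0 (n : ℤ)) (r * a n))) atTop
      (𝓝 (Real.exp (-r ^ (-α)))) := by
    simp only [maxLE_Ioc_zero]
    exact hei r hr0
  have hpair := hmixβ.tendsto_measureReal_inter_div hβ hstat hmeas (Real.rpow_pos_of_pos hr0 _)
    hnp hmax (Int.natAbs_pos.mpr hk)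
  refine squeeze_zero' (.of_forall fun n => div_nonneg measureReal_nonneg measureReal_nonneg) ?_
    (zero_mul (r ^ (-α)) ▸ hpair.mul hratio)
  filter_upwards [hpos, hatop.eventually_gt_atTop 0] with n hpn ha
  have hp'n : 0 < P.real {ω | r * a n < X 1 ω} :=
    ENNReal.toReal_pos (hrv.1 _ (mul_pos hr0 ha)).ne' (measure_ne_top _ _)
  change P.real _ / P.real _ ≤ _
  rw [hstat.measureReal_lt_eq hmeas 0 1, div_mul_div_cancel₀ hp'n.ne']
  exact div_le_div_of_nonneg_right
    (hstat.measureReal_inter_le_natAbs hmeas hk (mul_le_of_le_one_left ha.le hr1.le)) hpn.le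

/-- Proposition 2.2(ii): for a strictly stationary, strongly mixing sequence of
nonnegative regularly varying random variables with extremal index `θ = 1`, for every
integer `k ≠ 0` and every `r ∈ (0,1)`, `P(X_k > r aₙ | X_0 > aₙ) → 0`; i.e. the tail
process `(Y_k)` satisfies `Y_k = 0` a.s. for `k ≠ 0`. -/
theorem tail_process_vanishes
    {Ω : Type*} [MeasurableSpace Ω] (P : Measure Ω) [IsProbabilityMeasure P]
    (X : ℤ → Ω → ℝ) (hmeas : ∀ i, Measurable (X i)) (hpos : ∀ i ω, 0 ≤ X i ω)
    (hstat : StrictStationaryZ P X) (hmix : StrongMixingZ P X)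
    (α : ℝ) (hα : 0 < α) (hrv : RegularlyVaryingRV P (X 1) α)
    (a : ℕ → ℝ) (hapos : ∀ n, 0 < a n)
    (han : Tendsto (fun n : ℕ => (n : ℝ) * (P {ω | a n < X 1 ω}).toReal) atTop (𝓝 1))
    (hei : ∀ u : ℝ, 0 < u →
      Tendsto (fun n : ℕ =>
          (P {ω | ∀ i ∈ Finset.Icc 1 n, X (i : ℤ) ω ≤ u * a n}).toReal)
        atTop (𝓝 (Real.exp (-u ^ (-α))))) :
    ∀ k : ℤ, k ≠ 0 → ∀ r : ℝ, 0 < r → r < 1 →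
      Tendsto (fun n : ℕ =>
        (P ({ω | r * a n < X k ω} ∩ {ω | a n < X 0 ω})).toReal /
          (P {ω | a n < X 0 ω}).toReal)
        atTop (𝓝 0) :=
  tail_process_vanishes_general P X hmeas hstat hmix α hrv a han hei
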